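/- Let M be a generalized mean. The following are equivalent: (i) for all positive definite A = [a_{ij}] ∈ M_{2n}(ℝ), the vector (M(a_{jj}, a_{n+j,n+j}))_{j=1}^n is weakly supermajorized by the vector of symplectic eigenvalues of A; (ii) for all positive definite A ∈ M_{2n}(ℝ) with increasingly sorted symplectic eigenvalues δ₁ ≤ … ≤ δ_n and all k = 1,…,n, δ₁ + … + δ_k equals the minimum of Σ_{j=1}^k M(b_{jj}, b_{k+j,k+j}) over all matrices B = [b_{ij}] = Xᵀ A X where X ∈ M_{2n,2k}(ℝ) satisfies Xᵀ J_{2n} X = J_{2k}. -/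

import Mathlib

/-!
(ii) ⇒ (i): the coordinates carrying the `k` smallest entries of `(M(a_jj, a_{n+j,n+j}))_j` are
picked out by a coordinate selection `X`, for which `XᵀAX` is a principal submatrix of `A`.

(i) ⇒ (ii): the first `k` symplectic pairs of columns of `W` attain `δ₁ + ⋯ + δ_k`, because
`M(δ, δ) = δ`. Conversely, every `X` with `XᵀJX = J` is the beginning of a symplectic matrix `S`:
the symplectic complement of its columns is again a symplectic space, so one more symplectic pair
can always be appended. Then `SᵀAS` has the same symplectic spectrum as `A`, and (i) applied to it
bounds the sum of its first `k` diagonal means, which are those of `XᵀAX`, by `δ₁ + ⋯ + δ_k`.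
-/

open Matrix Finset

noncomputable section

/-- The standard symplectic form matrix over index type `ι ⊕ ι`. -/
def Jm (ι : Type*) [DecidableEq ι] : Matrix (ι ⊕ ι) (ι ⊕ ι) ℝ :=
  Matrix.fromBlocks 0 1 (-1) 0

/-- `W` is symplectic if `Wᵀ J W = J`. -/
def IsSymplectic {ι : Type*} [Fintype ι] [DecidableEq ι] (W : Matrix (ι ⊕ ι) (ι ⊕ ι) ℝ) : Prop :=
  Wᵀ * Jm ι * W = Jm ι


/-- A generalized mean: positive, continuous on `(0,∞)²`, symmetric, positively
homogeneous, monotone in each argument, and between its arguments. -/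
structure IsGenMean (M : ℝ → ℝ → ℝ) : Prop where
  pos : ∀ a b : ℝ, 0 < a → 0 < b → 0 < M a b
  cont : ContinuousOn (fun p : ℝ × ℝ => M p.1 p.2) (Set.Ioi (0:ℝ) ×ˢ Set.Ioi (0:ℝ))
  symm : ∀ a b : ℝ, 0 < a → 0 < b → M a b = M b a
  homog : ∀ a b r : ℝ, 0 < a → 0 < b → 0 < r → M (r * a) (r * b) = r * M a b
  mono : ∀ a a' b b' : ℝ, 0 < a → 0 < b → a ≤ a' → b ≤ b' → M a b ≤ M a' b'
  between : ∀ a b : ℝ, 0 < a → a ≤ b → a ≤ M a b ∧ M a b ≤ b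

/-- `x` is weakly supermajorized by `y` (`x ≺^w y`): for every `k`, the sum of the
`k` smallest entries of `x` is at least the sum of the `k` smallest entries of `y`. -/
def SupermajW {n : ℕ} (x y : Fin n → ℝ) : Prop :=
  ∀ k : ℕ, k ≤ n →
    ∑ j ∈ Finset.univ.filter (fun j : Fin n => (j : ℕ) < k), y (Tuple.sort y j) ≤
    ∑ j ∈ Finset.univ.filter (fun j : Fin n => (j : ℕ) < k), x (Tuple.sort x j)


section Sorting

lemma StrictMono.val_le_val_apply {k n : ℕ} {f : Fin k → Fin n} (hf : StrictMono f)
    (i : Fin k) : (i : ℕ) ≤ f i := by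
  simpa using card_le_card_of_injOn f (s := Iio i) (t := Iio (f i))
    (fun j hj => by simpa using hf (by simpa using hj)) hf.injective.injOn

lemma sum_filter_val_lt {R : Type*} [AddCommMonoid R] {n k : ℕ} (hk : k ≤ n) (f : Fin n → R) :
    ∑ j ∈ univ.filter (fun j : Fin n => (j : ℕ) < k), f j = ∑ j : Fin k, f (Fin.castLE hk j) := by
  have : univ.filter (fun j : Fin n => (j : ℕ) < k) = univ.map (Fin.castLEEmb hk) := by
    ext j
    simp only [mem_filter, mem_univ, true_and, mem_map, Fin.coe_castLEEmb]
    exact ⟨fun h => ⟨⟨j, h⟩, rfl⟩, by rintro ⟨a, rfl⟩; exact a.2⟩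
  rw [this, sum_map]
  rfl

lemma sum_castLE_le_sum_comp_of_monotone {n k : ℕ} (hk : k ≤ n) {y : Fin n → ℝ}
    (hy : Monotone y) {φ : Fin k → Fin n} (hφ : Function.Injective φ) :
    ∑ j : Fin k, y (Fin.castLE hk j) ≤ ∑ j : Fin k, y (φ j) := by
  set U := univ.map ⟨φ, hφ⟩
  have hU : U.card = k := by simp [U]
  calc ∑ j : Fin k, y (Fin.castLE hk j)
      ≤ ∑ j : Fin k, y (U.orderEmbOfFin hU j) :=
        sum_le_sum fun i _ => hy ((U.orderEmbOfFin hU).strictMono.val_le_val_apply i)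
    _ = ∑ u ∈ U, y u := by
        conv_rhs => rw [← map_orderEmbOfFin_univ U hU]
        exact (sum_map _ _ _).symm
    _ = ∑ j : Fin k, y (φ j) := sum_map _ _ _

lemma sum_sort_le_sum_comp {n k : ℕ} (x : Fin n → ℝ) {φ : Fin k → Fin n}
    (hφ : Function.Injective φ) :
    ∑ j ∈ univ.filter (fun j : Fin n => (j : ℕ) < k), x (Tuple.sort x j) ≤ ∑ j : Fin k, x (φ j) := by
  have hk : k ≤ n := by simpa using Fintype.card_le_of_injective φ hφ
  rw [sum_filter_val_lt hk]
  simpa using sum_castLE_le_sum_comp_of_monotone hk (Tuple.monotone_sort x)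
    ((Tuple.sort x).symm.injective.comp hφ)

lemma sum_sort_eq_of_monotone {n : ℕ} {δ : Fin n → ℝ} (hδ : Monotone δ) (s : Finset (Fin n)) :
    ∑ j ∈ s, δ (Tuple.sort δ j) = ∑ j ∈ s, δ j := by
  rw [Tuple.sort_eq_refl_iff_monotone.2 hδ]
  rfl

end Sorting

section Symplectic

lemma transpose_mul_mul_apply {ι κ κ' : Type*} [Fintype ι] (P : Matrix ι κ ℝ) (B : Matrix ι ι ℝ)
    (Q : Matrix ι κ' ℝ) (c : κ) (d : κ') : (Pᵀ * B * Q) c d = Pᵀ c ⬝ᵥ (B *ᵥ Qᵀ d) := by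
  simp only [mul_apply, transpose_apply, dotProduct, mulVec, sum_mul, mul_sum]
  rw [sum_comm]
  exact sum_congr rfl fun i _ => sum_congr rfl fun j _ => by ring

lemma transpose_mul_mul_submatrix {ι κ m : Type*} [Fintype ι] [Fintype m] (S : Matrix ι m ℝ)
    (B : Matrix ι ι ℝ) (f : κ → m) :
    (S.submatrix id f)ᵀ * B * S.submatrix id f = (Sᵀ * B * S).submatrix f f := by
  rw [transpose_submatrix, submatrix_mul _ _ f id f Function.bijective_id,
    submatrix_mul Sᵀ B f id id Function.bijective_id, submatrix_id_id]

variable {ι κ : Type*} [DecidableEq ι] [DecidableEq κ]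

lemma Jm_eq_neg_J : Jm ι = -J ι ℝ := by
  ext (i | i) (j | j) <;> simp [Jm, J]

@[simp] lemma Jm_inl_inl (i j : ι) : Jm ι (.inl i) (.inl j) = 0 := rfl

@[simp] lemma Jm_inl_inr (i j : ι) : Jm ι (.inl i) (.inr j) = (1 : Matrix ι ι ℝ) i j := rfl

@[simp] lemma Jm_inr_inl (i j : ι) : Jm ι (.inr i) (.inl j) = -(1 : Matrix ι ι ℝ) i j := rfl

@[simp] lemma Jm_inr_inr (i j : ι) : Jm ι (.inr i) (.inr j) = 0 := rfl

lemma Jm_transpose : (Jm ι)ᵀ = -Jm ι := by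
  simp [Jm_eq_neg_J, J_transpose]

lemma Jm_mul_transpose [Fintype ι] : Jm ι * (Jm ι)ᵀ = 1 := by
  simp [Jm_eq_neg_J, J_transpose, J_squared]

lemma isSymplectic_iff_mem_symplecticGroup [Fintype ι] {W : Matrix (ι ⊕ ι) (ι ⊕ ι) ℝ} :
    IsSymplectic W ↔ W ∈ symplecticGroup ι ℝ := by
  simp [IsSymplectic, SymplecticGroup.mem_iff', Jm_eq_neg_J]

lemma IsSymplectic.mul [Fintype ι] {S T : Matrix (ι ⊕ ι) (ι ⊕ ι) ℝ} (hS : IsSymplectic S)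
    (hT : IsSymplectic T) : IsSymplectic (S * T) := by
  rw [isSymplectic_iff_mem_symplecticGroup] at *
  exact mul_mem hS hT

lemma IsSymplectic.exists_inv [Fintype ι] {S : Matrix (ι ⊕ ι) (ι ⊕ ι) ℝ} (hS : IsSymplectic S) :
    ∃ L, IsSymplectic L ∧ L * S = 1 ∧ S * L = 1 := by
  let g : symplecticGroup ι ℝ := ⟨S, isSymplectic_iff_mem_symplecticGroup.1 hS⟩
  exact ⟨(g⁻¹ : symplecticGroup ι ℝ), isSymplectic_iff_mem_symplecticGroup.2 g⁻¹.2,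
    congrArg Subtype.val (inv_mul_cancel g), congrArg Subtype.val (mul_inv_cancel g)⟩

lemma dotProduct_Jm_mulVec_comm [Fintype ι] (u v : ι ⊕ ι → ℝ) :
    u ⬝ᵥ (Jm ι *ᵥ v) = -(v ⬝ᵥ (Jm ι *ᵥ u)) := by
  rw [dotProduct_mulVec, ← mulVec_transpose, Jm_transpose, neg_mulVec, neg_dotProduct,
    dotProduct_comm]

lemma dotProduct_Jm_mulVec_self [Fintype ι] (u : ι ⊕ ι → ℝ) : u ⬝ᵥ (Jm ι *ᵥ u) = 0 := by
  linarith [dotProduct_Jm_mulVec_comm u u]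

lemma eq_zero_of_forall_dotProduct_Jm_mulVec [Fintype ι] {u : ι ⊕ ι → ℝ}
    (hu : ∀ w, u ⬝ᵥ (Jm ι *ᵥ w) = 0) : u = 0 := by
  have := hu ((Jm ι)ᵀ *ᵥ u)
  rwa [mulVec_mulVec, Jm_mul_transpose, one_mulVec, dotProduct_self_eq_zero] at this

lemma Jm_submatrix_sumMap {φ : κ → ι} (hφ : Function.Injective φ) :
    (Jm ι).submatrix (Sum.map φ φ) (Sum.map φ φ) = Jm κ := by
  ext (i | i) (j | j) <;> simp [one_apply, hφ.eq_iff]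

end Symplectic

section Extension

variable {ι κ : Type*} [Fintype ι] [DecidableEq ι] [Fintype κ] [DecidableEq κ]

lemma exists_dotProduct_Jm_mulVec_ne_zero {X : Matrix (ι ⊕ ι) (κ ⊕ κ) ℝ}
    (hX : Xᵀ * Jm ι * X = Jm κ) {u : ι ⊕ ι → ℝ} (hu0 : u ≠ 0) (hu : Xᵀ *ᵥ (Jm ι *ᵥ u) = 0) :
    ∃ v, Xᵀ *ᵥ (Jm ι *ᵥ v) = 0 ∧ u ⬝ᵥ (Jm ι *ᵥ v) ≠ 0 := by
  by_contra! h
  refine hu0 (eq_zero_of_forall_dotProduct_Jm_mulVec fun w => ?_)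
  -- `w - X z` is symplectically orthogonal to the columns of `X`, and `u` pairs to zero with both
  -- `w - X z` and `X z`.
  set y := Xᵀ *ᵥ (Jm ι *ᵥ w)
  set z := (Jm κ)ᵀ *ᵥ y
  have hXz : Xᵀ *ᵥ (Jm ι *ᵥ (X *ᵥ z)) = y := by
    rw [mulVec_mulVec, mulVec_mulVec, hX, mulVec_mulVec, Jm_mul_transpose, one_mulVec]
  have h₁ : u ⬝ᵥ (Jm ι *ᵥ (w - X *ᵥ z)) = 0 := h _ (by rw [mulVec_sub, mulVec_sub, hXz, sub_self])
  have h₂ : u ⬝ᵥ (Jm ι *ᵥ (X *ᵥ z)) = 0 := by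
    rw [dotProduct_Jm_mulVec_comm, ← vecMul_transpose, ← dotProduct_mulVec, hu, dotProduct_zero,
      neg_zero]
  rw [mulVec_sub, dotProduct_sub, h₂, sub_zero] at h₁
  exact h₁

lemma exists_symplectic_pair_of_card_lt {X : Matrix (ι ⊕ ι) (κ ⊕ κ) ℝ}
    (hX : Xᵀ * Jm ι * X = Jm κ) (hcard : Fintype.card κ < Fintype.card ι) :
    ∃ u v, Xᵀ *ᵥ (Jm ι *ᵥ u) = 0 ∧ Xᵀ *ᵥ (Jm ι *ᵥ v) = 0 ∧ u ⬝ᵥ (Jm ι *ᵥ v) = 1 := by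
  obtain ⟨u, hu, hu0⟩ : ∃ u ∈ LinearMap.ker (Xᵀ * Jm ι).mulVecLin, u ≠ 0 :=
    Submodule.exists_mem_ne_zero_of_ne_bot (LinearMap.ker_ne_bot_of_finrank_lt (by simp; omega))
  rw [LinearMap.mem_ker, mulVecLin_apply, ← mulVec_mulVec] at hu
  obtain ⟨v, hv, huv⟩ := exists_dotProduct_Jm_mulVec_ne_zero hX hu0 hu
  exact ⟨u, (u ⬝ᵥ (Jm ι *ᵥ v))⁻¹ • v, hu, by simp [mulVec_smul, hv], by simp [mulVec_smul, huv]⟩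

end Extension

lemma exists_extension_succ {n k : ℕ} (hk : k < n) {X : Matrix (Fin n ⊕ Fin n) (Fin k ⊕ Fin k) ℝ}
    (hX : Xᵀ * Jm (Fin n) * X = Jm (Fin k)) :
    ∃ X' : Matrix (Fin n ⊕ Fin n) (Fin (k + 1) ⊕ Fin (k + 1)) ℝ,
      X'ᵀ * Jm (Fin n) * X' = Jm (Fin (k + 1)) ∧
      X'.submatrix id (Sum.map Fin.castSucc Fin.castSucc) = X := by
  obtain ⟨u, v, hu, hv, huv⟩ := exists_symplectic_pair_of_card_lt hX (by simpa using hk)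
  let cols : Fin (k + 1) ⊕ Fin (k + 1) → Fin n ⊕ Fin n → ℝ :=
    Sum.elim (Fin.snoc (fun j => Xᵀ (.inl j)) u) (Fin.snoc (fun j => Xᵀ (.inr j)) v)
  set X' : Matrix (Fin n ⊕ Fin n) (Fin (k + 1) ⊕ Fin (k + 1)) ℝ := (of cols)ᵀ
  have hX' c : X'ᵀ c = cols c := rfl
  refine ⟨X', ?_, ?_⟩
  · have hXX c d : Xᵀ c ⬝ᵥ (Jm (Fin n) *ᵥ Xᵀ d) = Jm (Fin k) c d := by
      rw [← transpose_mul_mul_apply, hX]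
    have hXu c : Xᵀ c ⬝ᵥ (Jm (Fin n) *ᵥ u) = 0 := congrFun hu c
    have hXv c : Xᵀ c ⬝ᵥ (Jm (Fin n) *ᵥ v) = 0 := congrFun hv c
    have huX c : u ⬝ᵥ (Jm (Fin n) *ᵥ Xᵀ c) = 0 := by rw [dotProduct_Jm_mulVec_comm, hXu, neg_zero]
    have hvX c : v ⬝ᵥ (Jm (Fin n) *ᵥ Xᵀ c) = 0 := by rw [dotProduct_Jm_mulVec_comm, hXv, neg_zero]
    have hvu : v ⬝ᵥ (Jm (Fin n) *ᵥ u) = -1 := by rw [dotProduct_Jm_mulVec_comm, huv]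
    ext c d
    rw [transpose_mul_mul_apply, hX', hX']
    rcases c with c | c <;> rcases d with d | d <;> cases c using Fin.lastCases <;>
      cases d using Fin.lastCases <;>
      simp [cols, hXX, hXu, hXv, huX, hvX, huv, hvu, dotProduct_Jm_mulVec_self, one_apply,
        (Fin.castSucc_ne_last _).symm]
  · ext i (c | c) <;> simp [X', cols]

lemma exists_isSymplectic_submatrix_eq {n k : ℕ} (hk : k ≤ n)
    {X : Matrix (Fin n ⊕ Fin n) (Fin k ⊕ Fin k) ℝ} (hX : Xᵀ * Jm (Fin n) * X = Jm (Fin k)) :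
    ∃ S, IsSymplectic S ∧ S.submatrix id (Sum.map (Fin.castLE hk) (Fin.castLE hk)) = X := by
  obtain ⟨d, hd⟩ : ∃ d, n - k = d := ⟨_, rfl⟩
  induction d generalizing k with
  | zero =>
    obtain rfl : k = n := by omega
    exact ⟨X, hX, by ext i (j | j) <;> rfl⟩
  | succ d ih =>
    obtain ⟨X', hX', rfl⟩ := exists_extension_succ (by omega : k < n) hX
    obtain ⟨S, hS, rfl⟩ := ih (by omega : k + 1 ≤ n) hX' (by omega)
    exact ⟨S, hS, by ext i (j | j) <;> rfl⟩

def diagMean (M : ℝ → ℝ → ℝ) {κ : Type*} (B : Matrix (κ ⊕ κ) (κ ⊕ κ) ℝ) (j : κ) : ℝ :=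
  M (B (.inl j) (.inl j)) (B (.inr j) (.inr j))

section KyFan

variable {M : ℝ → ℝ → ℝ} {n : ℕ} {A W : Matrix (Fin n ⊕ Fin n) (Fin n ⊕ Fin n) ℝ} {δ : Fin n → ℝ}

lemma exists_sum_filter_lt_eq_sum_diagMean (hM : IsGenMean M) (hδ : ∀ j, 0 < δ j)
    (hW : IsSymplectic W) (hWA : Wᵀ * A * W = fromBlocks (diagonal δ) 0 0 (diagonal δ))
    {k : ℕ} (hk : k ≤ n) :
    ∃ X : Matrix (Fin n ⊕ Fin n) (Fin k ⊕ Fin k) ℝ, Xᵀ * Jm (Fin n) * X = Jm (Fin k) ∧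
      ∑ j ∈ univ.filter (fun j : Fin n => (j : ℕ) < k), δ j = ∑ j, diagMean M (Xᵀ * A * X) j := by
  refine ⟨W.submatrix id (Sum.map (Fin.castLE hk) (Fin.castLE hk)), ?_, ?_⟩
  · rw [transpose_mul_mul_submatrix, hW, Jm_submatrix_sumMap (Fin.castLE_injective hk)]
  · rw [transpose_mul_mul_submatrix, hWA, sum_filter_val_lt hk]
    refine sum_congr rfl fun j _ => ?_
    have h := hM.between _ _ (hδ (Fin.castLE hk j)) le_rfl
    simpa [diagMean] using (le_antisymm h.2 h.1).symm

lemma sum_filter_lt_le_sum_diagMean {D : Matrix (Fin n ⊕ Fin n) (Fin n ⊕ Fin n) ℝ}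
    (hmaj : ∀ A' W' : Matrix (Fin n ⊕ Fin n) (Fin n ⊕ Fin n) ℝ, A'.PosDef → IsSymplectic W' →
      W'ᵀ * A' * W' = D → SupermajW (diagMean M A') δ)
    (hδ : Monotone δ) (hA : A.PosDef) (hW : IsSymplectic W) (hWA : Wᵀ * A * W = D) {k : ℕ}
    (hk : k ≤ n) {X : Matrix (Fin n ⊕ Fin n) (Fin k ⊕ Fin k) ℝ}
    (hX : Xᵀ * Jm (Fin n) * X = Jm (Fin k)) :
    ∑ j ∈ univ.filter (fun j : Fin n => (j : ℕ) < k), δ j ≤ ∑ j, diagMean M (Xᵀ * A * X) j := by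
  obtain ⟨S, hS, rfl⟩ := exists_isSymplectic_submatrix_eq hk hX
  obtain ⟨L, hL, hLS, hSL⟩ := hS.exists_inv
  have hS_inj : Function.Injective S.mulVec := fun x y hxy => by
    simpa [mulVec_mulVec, hLS] using congrArg (L *ᵥ ·) hxy
  have hSA : (Sᵀ * A * S).PosDef := by simpa using hA.conjTranspose_mul_mul_same hS_inj
  have hLW : (L * W)ᵀ * (Sᵀ * A * S) * (L * W) = D := by
    calc _ = Wᵀ * (S * L)ᵀ * A * ((S * L) * W) := by simp only [transpose_mul, Matrix.mul_assoc]
      _ = D := by rw [hSL, transpose_one, Matrix.mul_one, Matrix.one_mul, hWA]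
  calc ∑ j ∈ univ.filter (fun j : Fin n => (j : ℕ) < k), δ j
      = ∑ j ∈ univ.filter (fun j : Fin n => (j : ℕ) < k), δ (Tuple.sort δ j) :=
        (sum_sort_eq_of_monotone hδ _).symm
    _ ≤ ∑ j ∈ univ.filter (fun j : Fin n => (j : ℕ) < k),
          diagMean M (Sᵀ * A * S) (Tuple.sort (diagMean M (Sᵀ * A * S)) j) :=
        hmaj _ _ hSA (hL.mul hW) hLW k hk
    _ ≤ ∑ j, diagMean M (Sᵀ * A * S) (Fin.castLE hk j) :=
        sum_sort_le_sum_comp _ (Fin.castLE_injective hk)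
    _ = _ := by rw [transpose_mul_mul_submatrix]; rfl

lemma supermajW_diagMean_of_forall_le (hδ : Monotone δ)
    (h : ∀ k ≤ n, ∀ X : Matrix (Fin n ⊕ Fin n) (Fin k ⊕ Fin k) ℝ,
      Xᵀ * Jm (Fin n) * X = Jm (Fin k) →
      ∑ j ∈ univ.filter (fun j : Fin n => (j : ℕ) < k), δ j ≤ ∑ j, diagMean M (Xᵀ * A * X) j) :
    SupermajW (diagMean M A) δ := by
  intro k hk
  set φ := Tuple.sort (diagMean M A) ∘ Fin.castLE hk
  have hφ : Function.Injective φ := (Tuple.sort _).injective.comp (Fin.castLE_injective hk)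
  have hsel := h k hk ((1 : Matrix (Fin n ⊕ Fin n) (Fin n ⊕ Fin n) ℝ).submatrix id (Sum.map φ φ))
    (by rw [transpose_mul_mul_submatrix, transpose_one, Matrix.one_mul, Matrix.mul_one,
      Jm_submatrix_sumMap hφ])
  rw [transpose_mul_mul_submatrix, transpose_one, Matrix.one_mul, Matrix.mul_one] at hsel
  rw [sum_sort_eq_of_monotone hδ, sum_filter_val_lt hk (fun j => diagMean M A (Tuple.sort _ j))]
  exact hsel

end KyFan

theorem schur_iff_kyfan (M : ℝ → ℝ → ℝ) (hM : IsGenMean M) :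
    (∀ (n : ℕ) (A W : Matrix (Fin n ⊕ Fin n) (Fin n ⊕ Fin n) ℝ) (δ : Fin n → ℝ),
        A.PosDef → (∀ j, 0 < δ j) → Monotone δ → IsSymplectic W →
        Wᵀ * A * W = Matrix.fromBlocks (Matrix.diagonal δ) 0 0 (Matrix.diagonal δ) →
        SupermajW (fun j => M (A (Sum.inl j) (Sum.inl j)) (A (Sum.inr j) (Sum.inr j))) δ)
    ↔
    (∀ (n : ℕ) (A W : Matrix (Fin n ⊕ Fin n) (Fin n ⊕ Fin n) ℝ) (δ : Fin n → ℝ),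
        A.PosDef → (∀ j, 0 < δ j) → Monotone δ → IsSymplectic W →
        Wᵀ * A * W = Matrix.fromBlocks (Matrix.diagonal δ) 0 0 (Matrix.diagonal δ) →
        ∀ k : ℕ, k ≤ n →
          IsLeast
            {t : ℝ | ∃ X : Matrix (Fin n ⊕ Fin n) (Fin k ⊕ Fin k) ℝ,
              Xᵀ * Jm (Fin n) * X = Jm (Fin k) ∧
              t = ∑ j : Fin k,
                M ((Xᵀ * A * X) (Sum.inl j) (Sum.inl j)) ((Xᵀ * A * X) (Sum.inr j) (Sum.inr j))}
            (∑ j ∈ Finset.univ.filter (fun j : Fin n => (j : ℕ) < k), δ j)) := by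
  constructor
  · intro hmaj n A W δ hA hδ hδm hW hWA k hk
    refine ⟨exists_sum_filter_lt_eq_sum_diagMean hM hδ hW hWA hk, ?_⟩
    rintro t ⟨X, hX, rfl⟩
    exact sum_filter_lt_le_sum_diagMean
      (fun A' W' hA' hW' hWA' => hmaj n A' W' δ hA' hδ hδm hW' hWA') hδm hA hW hWA hk hX
  · intro hmin n A W δ hA hδ hδm hW hWA
    exact supermajW_diagMean_of_forall_le hδm fun k hk X hX =>
      (hmin n A W δ hA hδ hδm hW hWA k hk).2 ⟨X, hX, rfl⟩
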